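/- Let n, K : ℕ, let S be a Lagrangian F₂-subspace of V = (F₂×F₂)ⁿ, let φ ∈ ℂ^{F₂ⁿ} be a unit vector admitting a function ε : S → ℂ with E(s)·φ = ε(s)·φ for all s ∈ S, and let t : Fin K → V satisfy t_i + t_j ∉ S for all i ≠ j. Define P = Σ_{i} ψ_i ψ_iᴴ, the sum of the outer products of the vectors ψ_i = E(t_i)·φ. Then P is an orthogonal projection of rank K: Pᴴ = P, P·P = P, and Tr(P) = K. -/

import Mathlib

open Matrix

/-- The Pauli matrix `E(v)` for `v = (a|b) ∈ (F₂×F₂)ⁿ`: the `2ⁿ × 2ⁿ` complex matrix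
with `(x, y)` entry `(-1)^{b·y}` if `x = y + a` and `0` otherwise. -/
def PauliV {n : ℕ} (v : Fin n → ZMod 2 × ZMod 2) :
    Matrix (Fin n → ZMod 2) (Fin n → ZMod 2) ℂ :=
  Matrix.of fun x y =>
    if x = y + (fun k => (v k).1) then (-1 : ℂ) ^ (∑ k, ((v k).2 * y k).val) else 0

/-- The symplectic inner product `⟨v,v'⟩ = Σ_k (a_k b'_k + a'_k b_k) ∈ F₂`. -/
def sympl {n : ℕ} (v v' : Fin n → ZMod 2 × ZMod 2) : ZMod 2 :=
  ∑ k, ((v k).1 * (v' k).2 + (v' k).1 * (v k).2)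

/-- The outer product `ψψᴴ`, with `(x,y)` entry `ψ_x · conj(ψ_y)`. -/
def outer {N : Type*} (ψ : N → ℂ) : Matrix N N ℂ :=
  Matrix.vecMulVec ψ (star ψ)

/-!
A stabilizer state `φ` of a Lagrangian `S` satisfies `⟨φ, E(u) φ⟩ = 0` for every `u ∉ S`: since
`S = S^⊥`, some `s ∈ S` has `⟨s, u⟩ = 1`, so `E(s)` anticommutes with `E(u)`, and an eigenvector of a
unitary matrix `A` is orthogonal to its image under any `B` anticommuting with `A`. As
`E(tᵢ)ᴴ E(tⱼ) = ± E(tᵢ + tⱼ)`, the vectors `E(tᵢ) φ` are therefore orthonormal, and the sum of the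
outer products of an orthonormal family is an orthogonal projection of rank the size of the family.
-/

section Sign

variable {R : Type*} [Ring R]

lemma neg_one_pow_val_natCast (m : ℕ) : (-1 : R) ^ (m : ZMod 2).val = (-1) ^ m := by
  rw [ZMod.val_natCast, ← neg_one_pow_eq_pow_mod_two]

lemma neg_one_pow_val_add (a b : ZMod 2) :
    (-1 : R) ^ (a + b).val = (-1) ^ a.val * (-1) ^ b.val := by
  rw [ZMod.val_add, ← neg_one_pow_eq_pow_mod_two, pow_add]

lemma neg_one_pow_sum_val {ι : Type*} [Fintype ι] (g : ι → ZMod 2) :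
    (-1 : R) ^ (∑ k, (g k).val) = (-1) ^ (∑ k, g k).val := by
  rw [← neg_one_pow_val_natCast]
  push_cast [ZMod.natCast_val, ZMod.cast_id]
  rfl

end Sign

lemma dotProduct_mulVec_eq_zero_of_anticommute {𝕜 ι : Type*} [RCLike 𝕜] [Fintype ι]
    [DecidableEq ι] {A B : Matrix ι ι 𝕜} (hA : Aᴴ * A = 1) (hAB : A * B = -(B * A))
    {φ : ι → 𝕜} {ε : 𝕜} (hφ : A *ᵥ φ = ε • φ) :
    star φ ⬝ᵥ B *ᵥ φ = 0 := by
  have hφ' : star φ = star ε • (star φ ᵥ* A) := by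
    conv_lhs => rw [← one_mulVec φ, ← hA, ← mulVec_mulVec, hφ, mulVec_smul, star_smul,
      star_mulVec, conjTranspose_conjTranspose]
  have key : star φ ⬝ᵥ B *ᵥ φ = -(star ε * ε) * (star φ ⬝ᵥ B *ᵥ φ) := by
    conv_lhs => rw [hφ', smul_dotProduct, ← dotProduct_mulVec, mulVec_mulVec, hAB,
      neg_mulVec, ← mulVec_mulVec, hφ, mulVec_smul, dotProduct_neg, dotProduct_smul]
    simp only [smul_eq_mul]; ring
  have hpos : 1 + star ε * ε ≠ 0 := by
    rw [RCLike.star_def, RCLike.conj_mul]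
    exact_mod_cast (by positivity : (0 : ℝ) < 1 + ‖ε‖ ^ 2).ne'
  exact (mul_eq_zero.mp (by linear_combination key : (1 + star ε * ε) * _ = 0)).resolve_left hpos

section Outer

lemma conjTranspose_outer {N : Type*} (ψ : N → ℂ) : (outer ψ)ᴴ = outer ψ := by
  rw [outer, conjTranspose_vecMulVec, star_star]

variable {N : Type*} [Fintype N]

lemma outer_mul_outer (ψ χ : N → ℂ) :
    outer ψ * outer χ = (star ψ ⬝ᵥ χ) • vecMulVec ψ (star χ) := by
  rw [outer, outer, vecMulVec_mul_vecMulVec, vecMulVec_smul]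

lemma trace_outer [DecidableEq N] (ψ : N → ℂ) : (outer ψ).trace = star ψ ⬝ᵥ ψ := by
  rw [outer, trace_vecMulVec, dotProduct_comm]

variable {ι : Type*} [Fintype ι] {ψ : ι → N → ℂ}

lemma sum_outer_mul_self [DecidableEq ι]
    (hψ : ∀ i j, star (ψ i) ⬝ᵥ ψ j = if i = j then 1 else 0) :
    (∑ i, outer (ψ i)) * ∑ i, outer (ψ i) = ∑ i, outer (ψ i) := by
  simp only [Finset.sum_mul_sum, outer_mul_outer, hψ, ite_smul, one_smul, zero_smul,
    Finset.sum_ite_eq, Finset.mem_univ, if_true]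
  rfl

lemma trace_sum_outer [DecidableEq N] (hψ : ∀ i, star (ψ i) ⬝ᵥ ψ i = 1) :
    (∑ i, outer (ψ i)).trace = Fintype.card ι := by
  simp [trace_sum, trace_outer, hψ]

end Outer

lemma LinearMap.BilinForm.orthogonal_eq_self_of_isotropic {K V : Type*} [Field K] [AddCommGroup V]
    [Module K V] [FiniteDimensional K V] {B : LinearMap.BilinForm K V} (hB : B.Nondegenerate)
    {W : Submodule K V} (hW : ∀ w ∈ W, ∀ w' ∈ W, B w w' = 0)
    (hdim : 2 * Module.finrank K W = Module.finrank K V) :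
    B.orthogonal W = W := by
  have hle : W ≤ B.orthogonal W := fun w hw =>
    (B.mem_orthogonal_iff).2 fun w' hw' => hW w' hw' w hw
  exact (Submodule.eq_of_le_of_finrank_le hle (by rw [B.finrank_orthogonal hB]; omega)).symm

section Pauli

variable {n : ℕ}

lemma PauliV_apply (v : Fin n → ZMod 2 × ZMod 2) (x y : Fin n → ZMod 2) :
    PauliV v x y =
      if x = y + fun k => (v k).1 then (-1) ^ (∑ k, (v k).2 * y k).val else 0 := by
  rw [PauliV, of_apply, neg_one_pow_sum_val]

lemma PauliV_zero : PauliV (0 : Fin n → ZMod 2 × ZMod 2) = 1 := by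
  ext x y
  simp [PauliV_apply, one_apply, ← Pi.zero_def]

lemma PauliV_mul (v w : Fin n → ZMod 2 × ZMod 2) :
    PauliV v * PauliV w = (-1 : ℂ) ^ (∑ k, (v k).2 * (w k).1).val • PauliV (v + w) := by
  ext x z
  simp only [mul_apply, PauliV_apply, Matrix.smul_apply, smul_eq_mul, mul_ite, ite_mul, zero_mul,
    mul_zero, Finset.sum_ite_eq', Finset.mem_univ, if_true]
  have hshift : (z + fun k => (w k).1) + (fun k => (v k).1) = z + fun k => ((v + w) k).1 := by
    funext k; simp only [Pi.add_apply, Prod.fst_add]; ring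
  rw [hshift]
  split_ifs
  · rw [← neg_one_pow_val_add, ← neg_one_pow_val_add]
    congr 2
    simp only [Pi.add_apply, Prod.snd_add, ← Finset.sum_add_distrib]
    exact Finset.sum_congr rfl fun k _ => by ring
  · rfl

lemma conjTranspose_PauliV_mul_self (v : Fin n → ZMod 2 × ZMod 2) :
    (PauliV v)ᴴ * PauliV v = 1 := by
  ext x z
  simp only [mul_apply, conjTranspose_apply, PauliV_apply, apply_ite star, star_zero, mul_ite,
    ite_mul, zero_mul, mul_zero, Finset.sum_ite_eq', Finset.mem_univ, if_true, add_left_inj,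
    one_apply]
  rcases eq_or_ne x z with rfl | hxz
  · rw [if_pos rfl, if_pos rfl, star_pow, star_neg, star_one, ← mul_pow, neg_one_mul, neg_neg,
      one_pow]
  · rw [if_neg hxz.symm, if_neg hxz]

lemma PauliV_mul_self (v : Fin n → ZMod 2 × ZMod 2) :
    PauliV v * PauliV v = (-1 : ℂ) ^ (∑ k, (v k).2 * (v k).1).val • 1 := by
  have hvv : v + v = 0 := funext fun k => CharTwo.add_self_eq_zero (v k)
  rw [PauliV_mul, hvv, PauliV_zero]

lemma conjTranspose_PauliV (v : Fin n → ZMod 2 × ZMod 2) :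
    (PauliV v)ᴴ = (-1 : ℂ) ^ (∑ k, (v k).2 * (v k).1).val • PauliV v := by
  set c : ℂ := (-1) ^ (∑ k, (v k).2 * (v k).1).val
  have hc : c * c = 1 := by rw [← mul_pow, neg_one_mul, neg_neg, one_pow]
  calc (PauliV v)ᴴ = c • ((PauliV v)ᴴ * (c • 1)) := by
        rw [mul_smul_comm, mul_one, smul_smul, hc, one_smul]
    _ = c • PauliV v := by
        rw [← PauliV_mul_self, ← mul_assoc, conjTranspose_PauliV_mul_self, one_mul]

lemma PauliV_mul_swap (v w : Fin n → ZMod 2 × ZMod 2) :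
    PauliV v * PauliV w = (-1 : ℂ) ^ (sympl v w).val • (PauliV w * PauliV v) := by
  rw [PauliV_mul, PauliV_mul, smul_smul, ← neg_one_pow_val_add, add_comm w]
  congr 3
  simp only [sympl, ← Finset.sum_add_distrib]
  exact Finset.sum_congr rfl fun k _ => by grind

end Pauli

section Symplectic

open LinearMap (BilinForm)

variable {n : ℕ}

lemma sympl_comm (v w : Fin n → ZMod 2 × ZMod 2) : sympl v w = sympl w v :=
  Finset.sum_congr rfl fun _ _ => add_comm _ _

lemma sympl_single (v : Fin n → ZMod 2 × ZMod 2) (k : Fin n) (c : ZMod 2 × ZMod 2) :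
    sympl v (Pi.single k c) = (v k).1 * c.2 + c.1 * (v k).2 := by
  rw [sympl, Finset.sum_eq_single k (fun j _ hj => by simp [Pi.single_eq_of_ne hj]) (by simp),
    Pi.single_eq_same]

variable (n) in
def symplBilinForm : BilinForm (ZMod 2) (Fin n → ZMod 2 × ZMod 2) :=
  LinearMap.mk₂ (ZMod 2) sympl
    (fun _ _ _ => by
      simp only [sympl, ← Finset.sum_add_distrib, Pi.add_apply, Prod.fst_add, Prod.snd_add]
      exact Finset.sum_congr rfl fun _ _ => by ring)
    (fun _ _ _ => by
      simp only [sympl, Pi.smul_apply, Prod.smul_fst, Prod.smul_snd, smul_eq_mul, Finset.mul_sum]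
      exact Finset.sum_congr rfl fun _ _ => by ring)
    (fun _ _ _ => by
      simp only [sympl, ← Finset.sum_add_distrib, Pi.add_apply, Prod.fst_add, Prod.snd_add]
      exact Finset.sum_congr rfl fun _ _ => by ring)
    (fun _ _ _ => by
      simp only [sympl, Pi.smul_apply, Prod.smul_fst, Prod.smul_snd, smul_eq_mul, Finset.mul_sum]
      exact Finset.sum_congr rfl fun _ _ => by ring)

lemma symplBilinForm_apply (v w : Fin n → ZMod 2 × ZMod 2) : symplBilinForm n v w = sympl v w :=
  rfl

lemma symplBilinForm_isRefl : (symplBilinForm n).IsRefl := fun v w h => by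
  rwa [symplBilinForm_apply, sympl_comm] at h

lemma symplBilinForm_nondegenerate : (symplBilinForm n).Nondegenerate := by
  refine (symplBilinForm_isRefl.nondegenerate_iff_separatingLeft).2 fun v hv => ?_
  funext k
  have h₁ := hv (Pi.single k (0, 1))
  have h₂ := hv (Pi.single k (1, 0))
  simp only [symplBilinForm_apply, sympl_single] at h₁ h₂
  simp_all [Prod.ext_iff]

end Symplectic

lemma exists_sympl_eq_one_of_notMem {n : ℕ} {S : Submodule (ZMod 2) (Fin n → ZMod 2 × ZMod 2)}
    (hiso : ∀ s ∈ S, ∀ s' ∈ S, sympl s s' = 0) (hdim : Module.finrank (ZMod 2) S = n)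
    {u : Fin n → ZMod 2 × ZMod 2} (hu : u ∉ S) : ∃ s ∈ S, sympl s u = 1 := by
  have hfinrank : Module.finrank (ZMod 2) (Fin n → ZMod 2 × ZMod 2) = 2 * n := by
    rw [Module.finrank_pi_fintype, Module.finrank_prod, Module.finrank_self]
    simp [mul_comm]
  have hS : (symplBilinForm n).orthogonal S = S :=
    LinearMap.BilinForm.orthogonal_eq_self_of_isotropic symplBilinForm_nondegenerate hiso
      (by rw [hfinrank, hdim])
  by_contra! h
  refine hu (hS ▸ (LinearMap.BilinForm.mem_orthogonal_iff).2 fun s hs => ?_)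
  have hsu := h s hs
  rw [symplBilinForm_apply]
  generalize sympl s u = c at hsu ⊢
  revert c
  decide

section Stabilizer

variable {n : ℕ} {S : Submodule (ZMod 2) (Fin n → ZMod 2 × ZMod 2)}
  {φ : (Fin n → ZMod 2) → ℂ}

lemma dotProduct_PauliV_mulVec_eq_zero (hiso : ∀ s ∈ S, ∀ s' ∈ S, sympl s s' = 0)
    (hdim : Module.finrank (ZMod 2) S = n) (hφ : ∀ s ∈ S, ∃ c : ℂ, PauliV s *ᵥ φ = c • φ)
    {u : Fin n → ZMod 2 × ZMod 2} (hu : u ∉ S) : star φ ⬝ᵥ PauliV u *ᵥ φ = 0 := by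
  obtain ⟨s, hs, hsu⟩ := exists_sympl_eq_one_of_notMem hiso hdim hu
  obtain ⟨c, hc⟩ := hφ s hs
  refine dotProduct_mulVec_eq_zero_of_anticommute (conjTranspose_PauliV_mul_self s) ?_ hc
  rw [PauliV_mul_swap, hsu, ZMod.val_one, pow_one, neg_one_smul]

lemma dotProduct_PauliV_mulVec_PauliV_mulVec (hiso : ∀ s ∈ S, ∀ s' ∈ S, sympl s s' = 0)
    (hdim : Module.finrank (ZMod 2) S = n) (hφ : ∀ s ∈ S, ∃ c : ℂ, PauliV s *ᵥ φ = c • φ)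
    (hunit : star φ ⬝ᵥ φ = 1) {ι : Type*} [DecidableEq ι] {t : ι → Fin n → ZMod 2 × ZMod 2}
    (ht : ∀ i j, i ≠ j → t i + t j ∉ S) (i j : ι) :
    star (PauliV (t i) *ᵥ φ) ⬝ᵥ PauliV (t j) *ᵥ φ = if i = j then 1 else 0 := by
  rw [star_mulVec, ← dotProduct_mulVec, mulVec_mulVec]
  split_ifs with hij
  · rw [hij, conjTranspose_PauliV_mul_self, one_mulVec, hunit]
  · rw [conjTranspose_PauliV, smul_mul, PauliV_mul, smul_smul, smul_mulVec, dotProduct_smul,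
      dotProduct_PauliV_mulVec_eq_zero hiso hdim hφ (ht i j hij), smul_zero]

end Stabilizer

/-- `P = Σ_i ψ_i ψ_iᴴ`, where `ψ_i = E(t_i)·φ`, is an orthogonal projection of rank `K`:
`Pᴴ = P`, `P·P = P`, and `Tr(P) = K`. -/
theorem cws_projector {n K : ℕ}
    (S : Submodule (ZMod 2) (Fin n → ZMod 2 × ZMod 2))
    (hiso : ∀ s ∈ S, ∀ s' ∈ S, sympl s s' = 0)
    (hdim : Module.finrank (ZMod 2) S = n)
    (φ : (Fin n → ZMod 2) → ℂ) (hunit : ∑ x, star (φ x) * φ x = 1)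
    (ε : S → ℂ) (hε : ∀ s : S, (PauliV (s : Fin n → ZMod 2 × ZMod 2)).mulVec φ = ε s • φ)
    (t : Fin K → (Fin n → ZMod 2 × ZMod 2))
    (ht : ∀ i j, i ≠ j → t i + t j ∉ S)
    (P : Matrix (Fin n → ZMod 2) (Fin n → ZMod 2) ℂ)
    (hP : P = ∑ i, outer ((PauliV (t i)).mulVec φ)) :
    Pᴴ = P ∧ P * P = P ∧ P.trace = (K : ℂ) := by
  have horth := dotProduct_PauliV_mulVec_PauliV_mulVec hiso hdim
    (fun s hs => ⟨ε ⟨s, hs⟩, hε ⟨s, hs⟩⟩) hunit ht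
  subst hP
  refine ⟨?_, sum_outer_mul_self horth, ?_⟩
  · simp only [Matrix.conjTranspose_sum, conjTranspose_outer]
  · rw [trace_sum_outer fun i => (horth i i).trans (if_pos rfl), Fintype.card_fin]
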